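/- arXiv:2512.04993 — 2 statements merged into one kernel-verified Lean document; each statement's English description precedes it below -/
import Mathlib

section
/- Let r ≥ 2 be an integer, let G be a finite simple graph, and let X, Y be disjoint subsets of V(G). Suppose G is (X,Y,r)-free, i.e., G contains no clique on r vertices having exactly one vertex in X and exactly r-1 vertices in Y. If x, x' ∈ X are two distinct non-adjacent vertices of G, then the graph Z_{x',x}(G) is also (X,Y,r)-free. -/
open SimpleGraph

/-- Zykov symmetrization `Z_{u,v}(G)`: delete all edges at `u` and join `u` to the
neighbors of `v`; all adjacencies among vertices other than `u` are unchanged. -/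
def zykov {V : Type*} (G : SimpleGraph V) (u v : V) : SimpleGraph V where
  Adj a b :=
    (a ≠ u ∧ b ≠ u ∧ G.Adj a b) ∨ (a = u ∧ b ≠ u ∧ G.Adj v b) ∨ (b = u ∧ a ≠ u ∧ G.Adj v a)
  symm := by
    constructor
    intro a b h
    rcases h with ⟨ha, hb, hab⟩ | ⟨ha, hb, hvb⟩ | ⟨hb, ha, hva⟩
    · exact Or.inl ⟨hb, ha, hab.symm⟩
    · exact Or.inr (Or.inr ⟨ha, hb, hvb⟩)
    · exact Or.inr (Or.inl ⟨hb, ha, hva⟩)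
  loopless := by
    constructor
    intro a h
    rcases h with ⟨_, _, hab⟩ | ⟨ha, hb, _⟩ | ⟨hb, ha, _⟩
    · exact G.irrefl hab
    · exact hb ha
    · exact ha hb

/-- `G` is `(X,Y,r)`-free: it has no clique on `r` vertices with exactly one vertex in `X`
and exactly `r-1` vertices in `Y`. -/
def XYrFree {V : Type*} (G : SimpleGraph V) (X Y : Set V) (r : ℕ) : Prop :=
  ¬ ∃ K : Finset V, G.IsNClique r K ∧ ((K : Set V) ∩ X).ncard = 1 ∧
      ((K : Set V) ∩ Y).ncard = r - 1

theorem stmt_5 {V : Type*} [Fintype V] (r : ℕ) (hr : 2 ≤ r) (G : SimpleGraph V)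
    (X Y : Set V) (hXY : Disjoint X Y) (hfree : XYrFree G X Y r)
    (x x' : V) (hx : x ∈ X) (hx' : x' ∈ X) (hne : x ≠ x') (hadj : ¬ G.Adj x x') :
    XYrFree (zykov G x' x) X Y r := by
  classical
  rintro ⟨K, ⟨hKc, hKcard⟩, hKX, hKY⟩
  by_cases hx'K : x' ∈ K
  · -- replace x' with x
    obtain ⟨a, ha⟩ := Set.ncard_eq_one.mp hKX
    have hax' : a = x' := by
      have h1 : x' ∈ ({a} : Set V) := ha ▸ ⟨hx'K, hx'⟩
      simpa using h1.symm
    have hxK : x ∉ K := by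
      intro hxK
      have h1 : x ∈ ({a} : Set V) := ha ▸ ⟨hxK, hx⟩
      exact hne (by simpa [hax'] using h1)
    have hx'Y : x' ∉ Y := Set.disjoint_left.mp hXY hx'
    have hxY : x ∉ Y := Set.disjoint_left.mp hXY hx
    -- K ∩ Y = K \ {x'}
    have hsub : ((K : Set V) ∩ Y) ⊆ ((K : Set V) \ {x'}) := by
      rintro b ⟨hbK, hbY⟩
      exact ⟨hbK, by rintro rfl; exact hx'Y hbY⟩
    have hdc : ((K : Set V) \ {x'}).ncard = r - 1 := by
      rw [Set.ncard_diff_singleton_of_mem (by exact_mod_cast hx'K),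
        Set.ncard_coe_finset, hKcard]
    have heq : ((K : Set V) ∩ Y) = ((K : Set V) \ {x'}) :=
      Set.eq_of_subset_of_ncard_le hsub (by rw [hdc, hKY]) ((K : Set V).toFinite.diff)
    have hbY : ∀ b ∈ K, b ≠ x' → b ∈ Y := by
      intro b hbK hbne
      have : b ∈ ((K : Set V) ∩ Y) := heq ▸ ⟨hbK, fun h => hbne (by simpa using h)⟩
      exact this.2
    set K' : Finset V := insert x (K.erase x') with hK'
    have hxe : x ∉ K.erase x' := fun h => hxK (Finset.mem_of_mem_erase h)
    have hmem : ∀ b ∈ K.erase x', b ∈ K ∧ b ≠ x' :=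
      fun b hb => ⟨Finset.mem_of_mem_erase hb, Finset.ne_of_mem_erase hb⟩
    have hGxb : ∀ b ∈ K.erase x', G.Adj x b := by
      intro b hb
      obtain ⟨hbK, hbne⟩ := hmem b hb
      have hz : (zykov G x' x).Adj x' b := hKc hx'K hbK (Ne.symm hbne)
      rcases hz with ⟨h1, _, _⟩ | ⟨_, _, h3⟩ | ⟨h1, _, _⟩
      · exact absurd rfl h1
      · exact h3
      · exact absurd h1 hbne
    have hclique : G.IsNClique r K' := by
      constructor
      · intro u hu v hv huv
        simp only [hK', Finset.coe_insert, Set.mem_insert_iff, Finset.mem_coe] at hu hv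
        rcases hu with rfl | hu
        · rcases hv with rfl | hv
          · exact absurd rfl huv
          · exact hGxb v hv
        · rcases hv with rfl | hv
          · exact (hGxb u hu).symm
          · obtain ⟨huK, hune⟩ := hmem u hu
            obtain ⟨hvK, hvne⟩ := hmem v hv
            have hz : (zykov G x' x).Adj u v := hKc huK hvK huv
            rcases hz with ⟨_, _, h⟩ | ⟨h, _, _⟩ | ⟨h, _, _⟩
            · exact h
            · exact absurd h hune
            · exact absurd h hvne
      · rw [hK', Finset.card_insert_of_notMem hxe, Finset.card_erase_of_mem hx'K, hKcard]
        omega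
    apply hfree
    refine ⟨K', hclique, ?_, ?_⟩
    · have : ((K' : Set V) ∩ X) = {x} := by
        ext b
        simp only [hK', Finset.coe_insert, Set.mem_inter_iff, Set.mem_insert_iff,
          Finset.mem_coe, Set.mem_singleton_iff]
        constructor
        · rintro ⟨rfl | hb, hbX⟩
          · rfl
          · obtain ⟨hbK, hbne⟩ := hmem b hb
            exact absurd (hbY b hbK hbne) (Set.disjoint_left.mp hXY hbX)
        · rintro rfl
          exact ⟨Or.inl rfl, hx⟩
      rw [this, Set.ncard_singleton]
    · have : ((K' : Set V) ∩ Y) = ((K : Set V) ∩ Y) := by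
        ext b
        simp only [hK', Finset.coe_insert, Set.mem_inter_iff, Set.mem_insert_iff,
          Finset.mem_coe, Finset.mem_erase]
        constructor
        · rintro ⟨rfl | ⟨_, hb⟩, hbY'⟩
          · exact absurd hbY' hxY
          · exact ⟨hb, hbY'⟩
        · rintro ⟨hbK, hbY'⟩
          exact ⟨Or.inr ⟨fun h => hx'Y (h ▸ hbY'), hbK⟩, hbY'⟩
      rw [this, hKY]
  · apply hfree
    refine ⟨K, ⟨?_, hKcard⟩, hKX, hKY⟩
    intro u hu v hv huv
    have hu' : u ≠ x' := fun h => hx'K (h ▸ hu)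
    have hv' : v ≠ x' := fun h => hx'K (h ▸ hv)
    have hz : (zykov G x' x).Adj u v := hKc hu hv huv
    rcases hz with ⟨_, _, h⟩ | ⟨h, _, _⟩ | ⟨h, _, _⟩
    · exact h
    · exact absurd h hu'
    · exact absurd h hv'
end

section
/- Let r ≥ 2 be an integer, let G be a finite simple graph, and let X, Y be disjoint subsets of V(G). Suppose G is (X,Y,r)-free, i.e., G contains no clique on r vertices having exactly one vertex in X and exactly r-1 vertices in Y. If y, y' ∈ Y are two distinct non-adjacent vertices of G, then the graph Z_{y',y}(G) is also (X,Y,r)-free. -/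
open SimpleGraph

theorem stmt_6 {V : Type*} [Fintype V] (r : ℕ) (hr : 2 ≤ r) (G : SimpleGraph V)
    (X Y : Set V) (hXY : Disjoint X Y) (hfree : XYrFree G X Y r)
    (y y' : V) (hy : y ∈ Y) (hy' : y' ∈ Y) (hne : y ≠ y') (hadj : ¬ G.Adj y y') :
    XYrFree (zykov G y' y) X Y r := by
  classical
  rintro ⟨K, hK, hKX, hKY⟩
  have hnX : y ∉ X := fun h => (Set.disjoint_left.mp hXY h) hy
  have hn'X : y' ∉ X := fun h => (Set.disjoint_left.mp hXY h) hy'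
  by_cases hy'K : y' ∈ K
  · -- y' is in the clique; y is not
    have hyK : y ∉ K := by
      intro hyK
      have h := hK.1 (Finset.mem_coe.mpr hyK) (Finset.mem_coe.mpr hy'K) hne
      rcases h with ⟨_, h, _⟩ | ⟨h, _, _⟩ | ⟨_, _, h⟩
      · exact h rfl
      · exact hne h
      · exact G.irrefl h
    set K' : Finset V := insert y (K.erase y') with hK'
    have hcard : K'.card = r := by
      rw [hK', Finset.card_insert_of_notMem (fun h => hyK (Finset.mem_of_mem_erase h)),
        Finset.card_erase_of_mem hy'K, hK.2]
      omega
    have hclique : G.IsClique ↑K' := by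
      intro a ha b hb hab
      simp only [hK', Finset.coe_insert, Set.mem_insert_iff, Finset.mem_coe,
        Finset.mem_erase] at ha hb
      rcases ha with rfl | ⟨ha', haK⟩
      · rcases hb with rfl | ⟨hb', hbK⟩
        · exact absurd rfl hab
        · have h := hK.1 (Finset.mem_coe.mpr hy'K) (Finset.mem_coe.mpr hbK) (Ne.symm hb')
          rcases h with ⟨h, _, _⟩ | ⟨_, _, h⟩ | ⟨h', _, _⟩
          · exact absurd rfl h
          · exact h
          · exact absurd h' hb'
      · rcases hb with rfl | ⟨hb', hbK⟩
        · have h := hK.1 (Finset.mem_coe.mpr haK) (Finset.mem_coe.mpr hy'K) ha'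
          rcases h with ⟨_, h, _⟩ | ⟨h, _, _⟩ | ⟨_, _, h⟩
          · exact absurd rfl h
          · exact absurd h ha'
          · exact h.symm
        · have h := hK.1 (Finset.mem_coe.mpr haK) (Finset.mem_coe.mpr hbK) hab
          rcases h with ⟨_, _, h⟩ | ⟨h, _, _⟩ | ⟨h, _, _⟩
          · exact h
          · exact absurd h ha'
          · exact absurd h hb'
    have hX : ((K' : Set V) ∩ X) = ((K : Set V) ∩ X) := by
      ext x
      simp only [hK', Finset.coe_insert, Set.mem_inter_iff, Set.mem_insert_iff,
        Finset.mem_coe, Finset.mem_erase]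
      constructor
      · rintro ⟨rfl | ⟨hxne, hxK⟩, hxX⟩
        · exact absurd hxX hnX
        · exact ⟨hxK, hxX⟩
      · rintro ⟨hxK, hxX⟩
        exact ⟨Or.inr ⟨fun h => hn'X (h ▸ hxX), hxK⟩, hxX⟩
    have hY : ((K' : Set V) ∩ Y) = insert y (((K : Set V) ∩ Y) \ {y'}) := by
      ext x
      simp only [hK', Finset.coe_insert, Set.mem_inter_iff, Set.mem_insert_iff,
        Finset.mem_coe, Finset.mem_erase, Set.mem_diff, Set.mem_singleton_iff]
      constructor
      · rintro ⟨rfl | ⟨hxne, hxK⟩, hxY⟩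
        · exact Or.inl rfl
        · exact Or.inr ⟨⟨hxK, hxY⟩, hxne⟩
      · rintro (rfl | ⟨⟨hxK, hxY⟩, hxne⟩)
        · exact ⟨Or.inl rfl, hy⟩
        · exact ⟨Or.inr ⟨hxne, hxK⟩, hxY⟩
    have hy'mem : y' ∈ ((K : Set V) ∩ Y) := ⟨Finset.mem_coe.mpr hy'K, hy'⟩
    have hymem : y ∉ (((K : Set V) ∩ Y) \ {y'}) := fun h => hyK (Finset.mem_coe.mp h.1.1)
    have hYcard : ((K' : Set V) ∩ Y).ncard = r - 1 := by
      rw [hY, Set.ncard_insert_of_notMem hymem,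
        Set.ncard_diff_singleton_of_mem hy'mem, hKY]
      omega
    exact hfree ⟨K', ⟨hclique, hcard⟩, by rw [hX]; exact hKX, hYcard⟩
  · -- y' not in the clique: K itself works
    have hclique : G.IsClique ↑K := by
      intro a ha b hb hab
      have ha' : a ≠ y' := fun h => hy'K (h ▸ Finset.mem_coe.mp ha)
      have hb' : b ≠ y' := fun h => hy'K (h ▸ Finset.mem_coe.mp hb)
      have h := hK.1 ha hb hab
      rcases h with ⟨_, _, h⟩ | ⟨h, _, _⟩ | ⟨h, _, _⟩
      · exact h
      · exact absurd h ha'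
      · exact absurd h hb'
    exact hfree ⟨K, ⟨hclique, hK.2⟩, hKX, hKY⟩
end
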